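/- arXiv:2603.05635 — 6 statements merged into one kernel-verified Lean document; each statement's English description precedes it below -/
import Mathlib

section
/- Let k be a commutative unital ring, let m ≥ 1, and let A be a k-algebra such that [x₁,x₂]^m is a polynomial identity of A. Then an element a ∈ A is nilpotent if and only if it is strongly nilpotent. -/
/-- `p` is a polynomial identity of the `k`-algebra `A`: every `k`-algebra
homomorphism from the free associative algebra on countably many variables to
`A` (equivalently, every substitution of elements of `A` for the variables)
sends `p` to `0`. -/
def IsPolyId (k A : Type*) [CommRing k] [Semiring A] [Algebra k A]
    (p : FreeAlgebra k ℕ) : Prop :=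
  ∀ f : ℕ → A, FreeAlgebra.lift k f p = 0

/-- `[x₁,x₂]^m`, the `m`-th power of the commutator of the first two variables
of the free algebra. -/
noncomputable def commPow (k : Type*) [CommRing k] (m : ℕ) : FreeAlgebra k ℕ :=
  (FreeAlgebra.ι k 0 * FreeAlgebra.ι k 1 - FreeAlgebra.ι k 1 * FreeAlgebra.ι k 0) ^ m

/-- `[x₁,x₂][x₃,x₄]⋯[x₂ₘ₋₁,x₂ₘ]`, the product of `m` commutators in `2m`
distinct variables of the free algebra. -/
noncomputable def commProd (k : Type*) [CommRing k] (m : ℕ) : FreeAlgebra k ℕ :=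
  ((List.range m).map (fun i =>
    FreeAlgebra.ι k (2 * i) * FreeAlgebra.ι k (2 * i + 1)
      - FreeAlgebra.ι k (2 * i + 1) * FreeAlgebra.ι k (2 * i))).prod

/-- The standard polynomial `st_d(x₁,…,x_d) = Σ_{σ ∈ S_d} sgn(σ) x_{σ(1)}⋯x_{σ(d)}`
in the free algebra. -/
noncomputable def stPoly (k : Type*) [CommRing k] (d : ℕ) : FreeAlgebra k ℕ :=
  ∑ σ : Equiv.Perm (Fin d),
    (Equiv.Perm.sign σ : ℤ) •
      ((List.finRange d).map (fun i => FreeAlgebra.ι k ((σ i : Fin d) : ℕ))).prod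

/-- `A` satisfies a proper (monic multilinear) polynomial identity: for some
`n ≥ 1` there are coefficients `c σ ∈ k` for the non-identity permutations `σ`
of `{1,…,n}` such that `x₁⋯x_n + Σ_{σ ≠ id} c_σ x_{σ(1)}⋯x_{σ(n)}` is a
polynomial identity of `A`. -/
def SatisfiesProperId (k A : Type*) [CommRing k] [Semiring A] [Algebra k A] : Prop :=
  ∃ n : ℕ, 1 ≤ n ∧ ∃ c : Equiv.Perm (Fin n) → k,
    IsPolyId k A
      (((List.finRange n).map (fun i => FreeAlgebra.ι k (i : ℕ))).prod
        + ∑ σ ∈ Finset.univ.erase (1 : Equiv.Perm (Fin n)),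
            c σ • ((List.finRange n).map (fun i => FreeAlgebra.ι k ((σ i : Fin n) : ℕ))).prod)

/-- `a` is strongly nilpotent: every sequence `s` with `s 0 = a` and
`s (n+1) ∈ s n • A • s n` is eventually zero. -/
def IsStronglyNilpotent {A : Type*} [Ring A] (a : A) : Prop :=
  ∀ s : ℕ → A, s 0 = a → (∀ n, ∃ x : A, s (n + 1) = s n * x * s n) →
    ∃ N, ∀ n ≥ N, s n = 0

/-!
Strongly nilpotent elements are nilpotent in any ring, via the sequence `a ^ 2 ^ n`.
Conversely, suppose a sequence `s` as in the definition starts at a nilpotent `a` and never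
vanishes. By Zorn's lemma some two-sided ideal `P` is maximal among those missing every `s n`;
since `s (n + 1) ∈ s n A s n`, the quotient `A / P` is semiprime. In a semiprime ring no `b ≠ 0`
has `b (v b) ^ n = 0` for all `v` (Levitzki's argument, lowering `n` one step at a time), while
the identity `[x, y] ^ m = 0` gives `b (v b) ^ m = b [v, b] ^ m = 0` whenever `b ^ 2 = 0`. So
`A / P` is reduced, the image of `a` vanishes, and `a = s 0 ∈ P`: a contradiction.
-/

def IsSemiprimeRing (R : Type*) [Ring R] : Prop :=
  ∀ b : R, (∀ r, b * r * b = 0) → b = 0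

section SemiprimeRing

variable {R : Type*} [Ring R]

theorem mul_add_pow_eq_mul_pow {x w e : R} (h : ∀ i, x * w ^ i * e = 0) (j : ℕ) :
    x * (w + e) ^ j = x * w ^ j := by
  induction j with
  | zero => simp
  | succ j ih => rw [pow_succ, pow_succ, ← mul_assoc, ih, mul_add, h, add_zero, mul_assoc]

theorem mul_mul_pow_eq_zero_of_mul_self_eq_zero {m : ℕ}
    (hcomm : ∀ x y : R, (x * y - y * x) ^ m = 0) {b : R} (hb : b * b = 0) (v : R) :
    b * (v * b) ^ m = 0 := by
  have hbb : ∀ i, b * (v * b) ^ i * b = 0 := by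
    rintro (_ | i)
    · simpa using hb
    · rw [pow_succ, mul_assoc, mul_assoc, mul_assoc, hb]; simp
  have hvanish : ∀ i, b * (v * b) ^ i * -(b * v) = 0 := fun i => by
    rw [mul_neg, ← mul_assoc, hbb, zero_mul, neg_zero]
  calc b * (v * b) ^ m = b * (v * b + -(b * v)) ^ m := (mul_add_pow_eq_mul_pow hvanish m).symm
    _ = 0 := by rw [← sub_eq_add_neg, hcomm, mul_zero]

theorem mul_mul_pow_eq_zero_of_forall_mul_mul_pow_eq_zero {b : R} {n : ℕ}
    (hb : ∀ v, b * (v * b) ^ (n + 2) = 0) (z t : R) :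
    b * (z * b) ^ (n + 1) * (t * (b * (z * b) ^ (n + 1))) ^ (n + 1) = 0 := by
  have hb' : ∀ v k, n + 2 ≤ k → b * (v * b) ^ k = 0 := fun v k hk => by
    rw [← Nat.add_sub_cancel' hk, pow_add, ← mul_assoc, hb, zero_mul]
  set w := z * b
  set U := t * (b * w ^ (n + 1))
  -- Substituting `z + g` for `v` in `hb`, every term but `b w ^ (n + 1) * U ^ (n + 1)` vanishes.
  set g := w ^ (n + 1) * U ^ n * t
  have h1 : ∀ i, b * w * w ^ i * (g * b) = 0 := fun i => by
    have : b * w * w ^ i * (g * b) = b * w ^ (1 + i + (n + 1)) * (U ^ n * (t * b)) := by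
      simp only [g, pow_add, pow_one, mul_assoc]
    rw [this, hb' z _ (by omega), zero_mul]
  have h2 : ∀ i, b * (g * b) * w ^ i * (g * b) = 0 := by
    rintro (_ | i)
    · have hpow : ∀ k, (w ^ (n + 1) * (t * b)) ^ (k + 1) = w ^ (n + 1) * U ^ k * (t * b) := by
        intro k
        rw [pow_succ, ← mul_assoc, mul_pow_mul, mul_assoc t]
      have : b * (g * b) * w ^ 0 * (g * b) = b * (w ^ (n + 1) * (t * b)) ^ (n + 1 + n + 1) := by
        rw [hpow, pow_add U (n + 1) n, pow_succ U n]
        simp only [g, U, pow_zero, mul_one, mul_assoc]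
      have hvan := hb' (w ^ (n + 1) * t) (n + 1 + n + 1) (by omega)
      rwa [mul_assoc, ← this] at hvan
    · have : b * (g * b) * w ^ (i + 1) * (g * b)
          = b * w ^ (n + 1) * U ^ n * t * (b * w ^ (i + 1 + (n + 1))) * (U ^ n * (t * b)) := by
        simp only [g, pow_add, pow_one, mul_assoc]
      rw [this, hb' z (i + 1 + (n + 1)) (by omega), mul_zero, zero_mul]
  have hsplit : b * ((z + g) * b) ^ (n + 2)
      = b * w * (w + g * b) ^ (n + 1) + b * (g * b) * (w + g * b) ^ (n + 1) := by
    rw [add_mul, pow_succ', ← mul_assoc, mul_add, add_mul]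
  rw [← hb (z + g), hsplit, mul_add_pow_eq_mul_pow h1, mul_add_pow_eq_mul_pow h2, mul_assoc b w,
    ← pow_succ', hb z, zero_add]
  simp only [g, U, pow_succ, mul_assoc]

theorem IsSemiprimeRing.eq_zero_of_forall_mul_mul_pow_eq_zero (hR : IsSemiprimeRing R) {b : R}
    {n : ℕ} (hb : ∀ v, b * (v * b) ^ n = 0) : b = 0 := by
  suffices ∀ n (b : R), (∀ v, b * (v * b) ^ (n + 1) = 0) → b = 0 from
    this n b fun v => by rw [pow_succ, ← mul_assoc, hb, zero_mul]
  intro n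
  induction n with
  | zero => exact fun b hb => hR b fun r => by simpa [mul_assoc] using hb r
  | succ n ih =>
    exact fun b hb => ih b fun z => ih _ fun t =>
      mul_mul_pow_eq_zero_of_forall_mul_mul_pow_eq_zero hb z t

theorem IsSemiprimeRing.isReduced (hR : IsSemiprimeRing R) {m : ℕ}
    (hcomm : ∀ x y : R, (x * y - y * x) ^ m = 0) : IsReduced R :=
  (isReduced_iff_pow_one_lt 2 one_lt_two).2 fun b hb =>
    hR.eq_zero_of_forall_mul_mul_pow_eq_zero
      (mul_mul_pow_eq_zero_of_mul_self_eq_zero hcomm (by rwa [sq] at hb))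

end SemiprimeRing

namespace TwoSidedIdeal

variable {A : Type*} [Ring A]

theorem mul_mul_mem_of_mem_span_singleton_right {P : TwoSidedIdeal A} {x b y : A}
    (h : ∀ r, x * r * b ∈ P) (hy : y ∈ span {b}) (r : A) : x * r * y ∈ P := by
  induction hy using span_induction generalizing r with
  | mem y hy => rw [Set.mem_singleton_iff.1 hy]; exact h r
  | zero => simp
  | add y y' _ _ ih ih' => rw [mul_add]; exact P.add_mem (ih r) (ih' r)
  | neg y _ ih => rw [mul_neg]; exact P.neg_mem (ih r)
  | left_absorb a y _ ih => rw [← mul_assoc, mul_assoc x]; exact ih (r * a)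
  | right_absorb c y _ ih => rw [← mul_assoc]; exact P.mul_mem_right _ _ (ih r)

theorem mul_mul_mem_of_mem_span_singleton_left {P : TwoSidedIdeal A} {x b y : A}
    (h : ∀ r, b * r * x ∈ P) (hy : y ∈ span {b}) (r : A) : y * r * x ∈ P := by
  induction hy using span_induction generalizing r with
  | mem y hy => rw [Set.mem_singleton_iff.1 hy]; exact h r
  | zero => simp
  | add y y' _ _ ih ih' => rw [add_mul, add_mul]; exact P.add_mem (ih r) (ih' r)
  | neg y _ ih => rw [neg_mul, neg_mul]; exact P.neg_mem (ih r)
  | left_absorb a y _ ih => simpa only [mul_assoc] using P.mul_mem_left a _ (ih r)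
  | right_absorb c y _ ih => rw [mul_assoc y]; exact ih (c * r)

theorem mul_mul_mem_of_mem_sup_span_singleton {P : TwoSidedIdeal A} {b y z : A}
    (hb : ∀ r, b * r * b ∈ P) (hy : y ∈ P ⊔ span {b}) (hz : z ∈ P ⊔ span {b}) (r : A) :
    y * r * z ∈ P := by
  obtain ⟨p, hp, q, hq, rfl⟩ := mem_sup.1 hy
  obtain ⟨p', hp', q', hq', rfl⟩ := mem_sup.1 hz
  have hqq' : q * r * q' ∈ P :=
    mul_mul_mem_of_mem_span_singleton_left (mul_mul_mem_of_mem_span_singleton_right hb hq') hq r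
  rw [add_mul, add_mul, mul_add (q * r)]
  exact P.add_mem (P.mul_mem_right _ _ (P.mul_mem_right _ _ hp))
    (P.add_mem (P.mul_mem_left _ _ hp') hqq')

theorem exists_maximal_disjoint {S : Set A} (h0 : (0 : A) ∉ S) :
    ∃ P : TwoSidedIdeal A, Maximal (fun I : TwoSidedIdeal A => Disjoint (I : Set A) S) P := by
  suffices hchain : ∀ c ⊆ {I : TwoSidedIdeal A | Disjoint (I : Set A) S},
      IsChain (· ≤ ·) c → ∀ I ∈ c,
        ∃ U : TwoSidedIdeal A, Disjoint (U : Set A) S ∧ ∀ J ∈ c, J ≤ U by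
    obtain ⟨P, -, hP⟩ := zorn_le_nonempty₀ _ hchain ⊥ (by simpa [coe_bot] using h0)
    exact ⟨P, hP⟩
  intro c hcS hc I hI
  let U : TwoSidedIdeal A := .mk' (⋃ J ∈ c, (J : Set A)) (Set.mem_biUnion hI I.zero_mem)
    (fun hx hy => by
      obtain ⟨J, hJ, hxJ⟩ := Set.mem_iUnion₂.1 hx
      obtain ⟨K, hK, hyK⟩ := Set.mem_iUnion₂.1 hy
      obtain ⟨L, hL, hJL, hKL⟩ := hc.directedOn J hJ K hK
      exact Set.mem_biUnion hL (L.add_mem (hJL hxJ) (hKL hyK)))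
    (fun hx => by
      obtain ⟨J, hJ, hxJ⟩ := Set.mem_iUnion₂.1 hx
      exact Set.mem_biUnion hJ (J.neg_mem hxJ))
    (fun hy => by
      obtain ⟨J, hJ, hyJ⟩ := Set.mem_iUnion₂.1 hy
      exact Set.mem_biUnion hJ (J.mul_mem_left _ _ hyJ))
    (fun hx => by
      obtain ⟨J, hJ, hxJ⟩ := Set.mem_iUnion₂.1 hx
      exact Set.mem_biUnion hJ (J.mul_mem_right _ _ hxJ))
  refine ⟨U, ?_, fun J hJ x hx => ?_⟩
  · simp only [U, coe_mk', Set.disjoint_iUnion_left]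
    exact fun J hJ => hcS hJ
  · exact (mem_mk' ..).2 (Set.mem_biUnion hJ hx)

theorem mem_of_maximal_disjoint_range {s : ℕ → A} (hs : ∀ n, ∃ x, s (n + 1) = s n * x * s n)
    {P : TwoSidedIdeal A}
    (hP : Maximal (fun I : TwoSidedIdeal A => Disjoint (I : Set A) (Set.range s)) P)
    {b : A} (hb : ∀ r, b * r * b ∈ P) : b ∈ P := by
  by_contra hbP
  have hlt : P < P ⊔ span {b} := left_lt_sup.2 fun h => hbP (h (subset_span rfl))
  obtain ⟨_, hn, n, rfl⟩ := Set.not_disjoint_iff.1 (hP.not_prop_of_gt hlt)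
  obtain ⟨x, hx⟩ := hs n
  have hmem : s (n + 1) ∈ P := hx ▸ mul_mul_mem_of_mem_sup_span_singleton hb hn hn x
  exact Set.disjoint_left.1 hP.prop hmem ⟨n + 1, rfl⟩

theorem isSemiprimeRing_quotient_of_maximal_disjoint_range {s : ℕ → A}
    (hs : ∀ n, ∃ x, s (n + 1) = s n * x * s n) {P : TwoSidedIdeal A}
    (hP : Maximal (fun I : TwoSidedIdeal A => Disjoint (I : Set A) (Set.range s)) P) :
    IsSemiprimeRing P.ringCon.Quotient := by
  have hmk : ∀ x, P.ringCon.mk' x = 0 ↔ x ∈ P := fun x => by rw [← mem_ker, ker_ringCon_mk']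
  intro β hβ
  obtain ⟨b, rfl⟩ := P.ringCon.mk'_surjective β
  refine (hmk b).2 (mem_of_maximal_disjoint_range hs hP fun r => (hmk _).1 ?_)
  simpa only [map_mul] using hβ (P.ringCon.mk' r)

end TwoSidedIdeal

section StronglyNilpotent

variable {A : Type*} [Ring A]

theorem IsStronglyNilpotent.isNilpotent {a : A} (ha : IsStronglyNilpotent a) : IsNilpotent a := by
  obtain ⟨N, hN⟩ := ha (fun n => a ^ 2 ^ n) (pow_one a) fun n =>
    ⟨1, by rw [mul_one, ← pow_add, ← two_mul, ← pow_succ']⟩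
  exact ⟨2 ^ N, hN N le_rfl⟩

theorem IsNilpotent.isStronglyNilpotent {m : ℕ} (hcomm : ∀ x y : A, (x * y - y * x) ^ m = 0)
    {a : A} (ha : IsNilpotent a) : IsStronglyNilpotent a := by
  intro s hs0 hs
  by_contra hne
  have h0 : (0 : A) ∉ Set.range s := by
    rintro ⟨n, hn⟩
    refine hne ⟨n, fun k hk => ?_⟩
    induction k, hk using Nat.le_induction with
    | base => exact hn
    | succ k _ ih => obtain ⟨x, hx⟩ := hs k; rw [hx, ih, zero_mul, zero_mul]
  obtain ⟨P, hP⟩ := TwoSidedIdeal.exists_maximal_disjoint h0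
  have hcomm' : ∀ x y : P.ringCon.Quotient, (x * y - y * x) ^ m = 0 := fun x y => by
    obtain ⟨x, rfl⟩ := P.ringCon.mk'_surjective x
    obtain ⟨y, rfl⟩ := P.ringCon.mk'_surjective y
    rw [← map_mul, ← map_mul, ← map_sub, ← map_pow, hcomm, map_zero]
  have : IsReduced P.ringCon.Quotient :=
    (TwoSidedIdeal.isSemiprimeRing_quotient_of_maximal_disjoint_range hs hP).isReduced hcomm'
  have haP : a ∈ P := by
    rw [← TwoSidedIdeal.ker_ringCon_mk' P, TwoSidedIdeal.mem_ker]
    exact (ha.map P.ringCon.mk').eq_zero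
  exact Set.disjoint_left.1 hP.prop haP ⟨0, hs0⟩

end StronglyNilpotent

theorem IsPolyId.commutator_pow_eq_zero {k A : Type*} [CommRing k] [Ring A] [Algebra k A]
    {m : ℕ} (hid : IsPolyId k A (commPow k m)) (x y : A) : (x * y - y * x) ^ m = 0 := by
  simpa [commPow] using hid fun i => if i = 0 then x else y

theorem nilpotent_iff_stronglyNilpotent_general
    (k A : Type*) [CommRing k] [Ring A] [Algebra k A]
    (m : ℕ) (hid : IsPolyId k A (commPow k m)) (a : A) :
    IsNilpotent a ↔ IsStronglyNilpotent a :=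
  ⟨IsNilpotent.isStronglyNilpotent hid.commutator_pow_eq_zero, IsStronglyNilpotent.isNilpotent⟩

theorem nilpotent_iff_stronglyNilpotent
    (k A : Type*) [CommRing k] [Ring A] [Algebra k A]
    (m : ℕ) (hm : 1 ≤ m) (hid : IsPolyId k A (commPow k m)) (a : A) :
    IsNilpotent a ↔ IsStronglyNilpotent a :=
  nilpotent_iff_stronglyNilpotent_general k A m hid a
end

section
/- Let F be an algebraically closed field and let A be a finite-dimensional F-algebra such that every nilpotent element of A is strongly nilpotent. Then there exists m ≥ 1 such that [x₁,x₂]^m is a polynomial identity of A. -/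
/-!
Let `J` be the Jacobson radical of `A`; since `A` is Artinian, `J ^ k = 0` for some `k`.
`J` is semiprime (`a A a ⊆ J` forces `a ∈ J`), so from a strongly nilpotent `a ∉ J` one could
build a sequence `a, a y a, …` that never enters `J`; hence every nilpotent element lies in `J`
and `A ⧸ J` is reduced. In a reduced algebra over an algebraically closed field, Lagrange
interpolation on the roots of the minimal polynomial writes every algebraic element as a linear
combination of idempotents, and idempotents are central. So `A ⧸ J` is commutative, every
commutator lies in `J`, and `[x₁, x₂] ^ k = 0`.
-/

open Polynomial

theorem IsStronglyNilpotent.mem_of_forall_mul_mul_mem {A : Type*} [Ring A] {J : Ideal A}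
    (hJ : ∀ a, (∀ y, a * y * a ∈ J) → a ∈ J) {x : A} (hx : IsStronglyNilpotent x) :
    x ∈ J := by
  by_contra hxJ
  choose! y hy using fun a (ha : a ∉ J) => not_forall.mp (mt (hJ a) ha)
  let s : ℕ → A := fun n => Nat.rec x (fun _ a => a * y a * a) n
  have hs : ∀ n, s n ∉ J := fun n => by
    induction n with
    | zero => exact hxJ
    | succ n ih => exact hy _ ih
  obtain ⟨N, hN⟩ := hx s rfl fun n => ⟨y (s n), rfl⟩
  exact hs N (hN N le_rfl ▸ J.zero_mem)

theorem Ring.mem_jacobson_of_forall_mul_mul_mem {R : Type*} [Ring R] {a : R}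
    (h : ∀ y, a * y * a ∈ Ring.jacobson R) : a ∈ Ring.jacobson R := by
  have hsq : ∀ y, (y * a) * (y * a) ∈ Ideal.jacobson (⊥ : Ideal R) := fun y => by
    simpa only [Ideal.jacobson_bot, mul_assoc] using (Ring.jacobson R).mul_mem_left y (h y)
  rw [← Ideal.jacobson_bot, Ideal.mem_jacobson_iff]
  intro y
  obtain ⟨w, hw⟩ := Ideal.mem_jacobson_iff.mp (hsq y) (-1)
  -- `w` is a left inverse of `1 - (y a)² = (1 - y a) (1 + y a)`
  refine ⟨w * (1 - y * a), ?_⟩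
  rw [Submodule.mem_bot] at hw ⊢
  calc w * (1 - y * a) * y * a + w * (1 - y * a) - 1
      = w * -1 * (y * a * (y * a)) + w - 1 := by noncomm_ring
    _ = 0 := hw

theorem IsIdempotentElem.commute_of_isReduced {R : Type*} [Ring R] [IsReduced R] {e : R}
    (he : IsIdempotentElem e) (a : R) : Commute e a := by
  have hd : e * e - e = 0 := sub_eq_zero.mpr he.eq
  have hl : (e * a - e * a * e) ^ 2 = 0 := by
    calc (e * a - e * a * e) ^ 2 = e * a * (e * e - e) * a * e - e * a * (e * e - e) * a := by
          noncomm_ring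
      _ = 0 := by rw [hd]; noncomm_ring
  have hr : (a * e - e * a * e) ^ 2 = 0 := by
    calc (a * e - e * a * e) ^ 2 = e * a * (e * e - e) * a * e - a * (e * e - e) * a * e := by
          noncomm_ring
      _ = 0 := by rw [hd]; noncomm_ring
  calc e * a = e * a * e := sub_eq_zero.mp (IsReduced.eq_zero _ ⟨2, hl⟩)
    _ = a * e := (sub_eq_zero.mp (IsReduced.eq_zero _ ⟨2, hr⟩)).symm

theorem Ideal.isReduced_quotient {A : Type*} [Ring A] {I : Ideal A} [I.IsTwoSided]
    (hnil : ∀ a ∈ I, IsNilpotent a) (hmem : ∀ a, IsNilpotent a → a ∈ I) :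
    IsReduced (A ⧸ I) := by
  refine ⟨fun b ⟨n, hn⟩ => ?_⟩
  obtain ⟨a, rfl⟩ := Ideal.Quotient.mk_surjective b
  rw [← map_pow, Ideal.Quotient.eq_zero_iff_mem] at hn
  obtain ⟨k, hk⟩ := hnil _ hn
  exact Ideal.Quotient.eq_zero_iff_mem.mpr (hmem a ⟨n * k, by rw [pow_mul, hk]⟩)

namespace IsIntegral

variable {F B : Type*} [Field F] [IsAlgClosed F] [Ring B] [Algebra F B] [IsReduced B] {x : B}

theorem aeval_eq_zero_of_eval_roots_eq_zero (hx : IsIntegral F x) {g : F[X]}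
    (hg : ∀ c ∈ (minpoly F x).roots, g.eval c = 0) : aeval x g = 0 := by
  have hdvd : minpoly F x ∣ g ^ Multiset.card (minpoly F x).roots := by
    conv_lhs => rw [(IsAlgClosed.splits _).eq_prod_roots_of_monic (minpoly.monic hx)]
    rw [← Multiset.prod_replicate, ← Multiset.map_const']
    exact Multiset.prod_dvd_prod_of_dvd _ _ fun c hc => dvd_iff_isRoot.mpr (hg c hc)
  obtain ⟨r, hr⟩ := hdvd
  exact IsReduced.eq_zero _ ⟨_, by rw [← map_pow, hr, map_mul, minpoly.aeval, zero_mul]⟩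

theorem exists_eq_sum_smul_isIdempotentElem (hx : IsIntegral F x) :
    ∃ (s : Finset F) (e : F → B),
      (∀ c ∈ s, IsIdempotentElem (e c)) ∧ x = ∑ c ∈ s, c • e c := by
  classical
  set s := (minpoly F x).roots.toFinset
  have hzero (g : F[X]) (hg : ∀ c ∈ s, g.eval c = 0) : aeval x g = 0 :=
    hx.aeval_eq_zero_of_eval_roots_eq_zero fun c hc => hg c (Multiset.mem_toFinset.mpr hc)
  refine ⟨s, fun c => aeval x (Lagrange.basis s id c), fun c hc => ?_, ?_⟩
  · have := hzero (Lagrange.basis s id c * Lagrange.basis s id c - Lagrange.basis s id c)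
      fun d hd => by
        by_cases hcd : c = d
        · subst hcd
          have h1 : (Lagrange.basis s id c).eval c = 1 :=
            Lagrange.eval_basis_self (Set.injOn_id _) hd
          rw [eval_sub, eval_mul, h1, mul_one, sub_self]
        · have h0 : (Lagrange.basis s id c).eval d = 0 :=
            Lagrange.eval_basis_of_ne (v := id) hcd hd
          rw [eval_sub, eval_mul, h0, mul_zero, sub_self]
    rwa [map_sub, map_mul, sub_eq_zero] at this
  · have := hzero (X - Lagrange.interpolate s id id) fun d hd => by
      have hd' : (Lagrange.interpolate s id id).eval d = d :=
        Lagrange.eval_interpolate_at_node id (Set.injOn_id _) hd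
      rw [eval_sub, eval_X, hd', sub_self]
    rw [map_sub, aeval_X, sub_eq_zero, Lagrange.interpolate_apply, map_sum] at this
    refine this.trans (Finset.sum_congr rfl fun c _ => ?_)
    rw [map_mul, aeval_C, Algebra.smul_def, id]

theorem commute_of_isReduced (hx : IsIntegral F x) (y : B) : Commute x y := by
  obtain ⟨s, e, he, rfl⟩ := hx.exists_eq_sum_smul_isIdempotentElem
  exact Commute.sum_left _ _ _ fun c hc => ((he c hc).commute_of_isReduced y).smul_left c

end IsIntegral

theorem finDim_stronglyNilpotent_implies_commPow_id
    (F A : Type*) [Field F] [IsAlgClosed F] [Ring A] [Algebra F A]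
    [FiniteDimensional F A]
    (h : ∀ a : A, IsNilpotent a → IsStronglyNilpotent a) :
    ∃ m : ℕ, 1 ≤ m ∧ IsPolyId F A (commPow F m) := by
  have := IsArtinianRing.of_finite F A
  obtain ⟨k, hk⟩ := IsArtinianRing.isNilpotent_jacobson_bot (R := A)
  rw [Ideal.jacobson_bot] at hk
  have hpow : ∀ a ∈ Ring.jacobson A, a ^ k = 0 := fun a ha => by
    simpa only [hk, Submodule.zero_eq_bot, Submodule.mem_bot] using Ideal.pow_mem_pow ha k
  have hmem : ∀ a, IsNilpotent a → a ∈ Ring.jacobson A := fun a ha =>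
    (h a ha).mem_of_forall_mul_mul_mem fun _ => Ring.mem_jacobson_of_forall_mul_mul_mem
  have := Ideal.isReduced_quotient (fun a ha => ⟨k, hpow a ha⟩) hmem
  have hcomm (a b : A) : a * b - b * a ∈ Ring.jacobson A := by
    rw [← Ideal.Quotient.eq_zero_iff_mem, map_sub, map_mul, map_mul, sub_eq_zero]
    exact ((IsIntegral.of_finite F a).map
      (Ideal.Quotient.mkₐ F (Ring.jacobson A))).commute_of_isReduced _
  refine ⟨k + 1, Nat.le_add_left 1 k, fun f => ?_⟩
  simp only [commPow, map_pow, map_sub, map_mul, FreeAlgebra.lift_ι_apply]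
  exact pow_eq_zero_of_le k.le_succ (hpow _ (hcomm _ _))
end

section
/- Let F be an algebraically closed field and let A be an F-algebra such that [x₁,x₂]^m is a polynomial identity of A for some m ≥ 1. If M is a simple left A-module that is finite-dimensional as an F-vector space, then dim_F M = 1. -/
/-!
By Schur's lemma every `A`-endomorphism of `M` is a scalar, so the Jacobson density theorem makes
the action map `A → End_F M` surjective (Burnside's theorem). Polynomial identities pass to
homomorphic images, hence the matrix algebra `Mₙ(F)`, `n = dim_F M`, satisfies `[x₁,x₂]^m = 0`. For
`n ≥ 2` this fails on `x₁ = E₁₂`, `x₂ = E₂₁`, whose commutator `E₁₁ - E₂₂` is not nilpotent.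
-/

theorem IsPolyId.of_surjective {k A B : Type*} [CommRing k] [Semiring A] [Semiring B]
    [Algebra k A] [Algebra k B] {p : FreeAlgebra k ℕ} (hp : IsPolyId k A p)
    {φ : A →ₐ[k] B} (hφ : Function.Surjective φ) : IsPolyId k B p := by
  intro f
  choose g hg using fun i => hφ (f i)
  have : FreeAlgebra.lift k f = φ.comp (FreeAlgebra.lift k g) := by
    ext i
    simp [hg]
  rw [this, AlgHom.comp_apply, hp g, map_zero]

theorem lift_commPow {k A : Type*} [CommRing k] [Ring A] [Algebra k A] (m : ℕ) (f : ℕ → A) :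
    FreeAlgebra.lift k f (commPow k m) = (f 0 * f 1 - f 1 * f 0) ^ m := by
  simp [commPow]

namespace Matrix

theorem not_isPolyId_commPow {k : Type*} [CommRing k] [Nontrivial k] {n : ℕ} (hn : 2 ≤ n)
    (m : ℕ) : ¬ IsPolyId k (Matrix (Fin n) (Fin n) k) (commPow k m) := by
  intro h
  let i : Fin n := ⟨0, by omega⟩
  let j : Fin n := ⟨1, by omega⟩
  have hij : i ≠ j := by simp [i, j, Fin.ext_iff]
  have hcomm : single i j (1 : k) * single j i 1 - single j i 1 * single i j 1
      = diagonal fun l => Pi.single i 1 l - Pi.single j 1 l := by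
    rw [single_mul_single_same, single_mul_single_same, mul_one, ← diagonal_single,
      ← diagonal_single, diagonal_sub]
  have key := congrFun₂ (h fun l => if l = 0 then single i j 1 else single j i 1) i i
  rw [lift_commPow] at key
  simp only [if_true, one_ne_zero, if_false, hcomm, diagonal_pow, diagonal_apply_eq] at key
  simp [hij] at key

end Matrix

theorem IsSimpleModule.lsmul_surjective_of_isAlgClosed (F : Type*) {A M : Type*} [Field F]
    [IsAlgClosed F] [Ring A] [Algebra F A] [AddCommGroup M] [Module A M] [IsSimpleModule A M]
    [Module F M] [IsScalarTower F A M] [FiniteDimensional F M] :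
    Function.Surjective (Algebra.lsmul F F M : A →ₐ[F] Module.End F M) := by
  intro f
  have hscalar := (algebraMap_end_bijective_of_isAlgClosed F (A := A) (V := M)).2
  let g : Module.End (Module.End A M) M :=
    { toFun := f
      map_add' := f.map_add
      map_smul' := by
        intro φ x
        obtain ⟨c, rfl⟩ := hscalar φ
        simp }
  have : Module.Finite (Module.End A M) M := .of_restrictScalars_finite F _ _
  obtain ⟨a, ha⟩ := Module.Finite.toModuleEnd_moduleEnd_surjective (R := A) g
  exact ⟨a, LinearMap.ext fun x => congr($ha x)⟩

theorem simple_module_one_dimensional_general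
    (F A : Type*) [Field F] [IsAlgClosed F] [Ring A] [Algebra F A]
    (m : ℕ) (hid : IsPolyId F A (commPow F m))
    (M : Type*) [AddCommGroup M] [Module A M] [IsSimpleModule A M]
    [Module F M] [IsScalarTower F A M] [FiniteDimensional F M] :
    Module.finrank F M = 1 := by
  have : Nontrivial M := IsSimpleModule.nontrivial A M
  have hpos : 0 < Module.finrank F M := Module.finrank_pos
  by_contra hne
  have hdim : 2 ≤ Module.finrank F M := by omega
  have hid_end :=
    hid.of_surjective (IsSimpleModule.lsmul_surjective_of_isAlgClosed F (A := A) (M := M))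
  let e := LinearMap.toMatrixAlgEquiv (Module.finBasis F M)
  exact Matrix.not_isPolyId_commPow hdim m (hid_end.of_surjective (φ := e.toAlgHom) e.surjective)

theorem simple_module_one_dimensional
    (F A : Type*) [Field F] [IsAlgClosed F] [Ring A] [Algebra F A]
    (m : ℕ) (hm : 1 ≤ m) (hid : IsPolyId F A (commPow F m))
    (M : Type*) [AddCommGroup M] [Module A M] [IsSimpleModule A M]
    [Module F M] [IsScalarTower F A M] [FiniteDimensional F M] :
    Module.finrank F M = 1 :=
  simple_module_one_dimensional_general F A m hid M
end

section
/- Let k be a commutative unital ring, let m ≥ 1, and let A be a k-algebra such that the product of m commutators [x₁,x₂][x₃,x₄]⋯[x₂ₘ₋₁,x₂ₘ] is a polynomial identity of A. Then the two-sided ideal of A generated by all commutators {ab − ba : a, b ∈ A} is nilpotent: there exists N such that every product of N elements of this ideal equals 0. -/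
/-! Let `Tₙ = commProdSpan A n` be the left ideal spanned by the products of `n` commutators.
Since `c * r = r * c + [c, r]`, a commutator moves past any left coefficient at the cost of one
more commutator, so `Tₐ * T_b ⊆ T_{a+b}`; in particular every `Tₙ` is two-sided. The commutator
ideal lies in `T₁`, hence a product of `m` of its elements lies in `Tₘ`, which is spanned by values
of `[x₁,x₂]⋯[x₂ₘ₋₁,x₂ₘ]` and therefore vanishes. -/

section CommProdSpan

variable {A : Type*} [Ring A]

variable (A) in
def commutators : Set A := {y : A | ∃ a b : A, y = a * b - b * a}

variable (A) in
def commProdSpan (n : ℕ) : Ideal A :=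
  Ideal.span {p : A | ∃ l : List A, l.length = n ∧ (∀ c ∈ l, c ∈ commutators A) ∧ p = l.prod}

theorem list_prod_mem_commProdSpan {l : List A} (hl : ∀ c ∈ l, c ∈ commutators A) :
    l.prod ∈ commProdSpan A l.length :=
  Ideal.subset_span ⟨l, rfl, hl, rfl⟩

theorem mem_commProdSpan_zero (x : A) : x ∈ commProdSpan A 0 := by
  simpa using (commProdSpan A 0).mul_mem_left x (list_prod_mem_commProdSpan (l := []) (by simp))

theorem commutator_mul_mem_commProdSpan {n : ℕ} {c x : A} (hc : c ∈ commutators A)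
    (hx : x ∈ commProdSpan A n) : c * x ∈ commProdSpan A (n + 1) := by
  induction hx using Submodule.span_induction generalizing c with
  | mem p hp =>
    obtain ⟨l, rfl, hl, rfl⟩ := hp
    simpa using list_prod_mem_commProdSpan (l := c :: l) (by simpa [hc] using hl)
  | zero => simp
  | add x y _ _ hx hy => simpa [mul_add] using add_mem (hx hc) (hy hc)
  | smul r x _ hx =>
    have hcomm : c * (r * x) = r * (c * x) + (c * r - r * c) * x := by noncomm_ring
    rw [smul_eq_mul, hcomm]
    exact add_mem ((commProdSpan A (n + 1)).mul_mem_left r (hx hc)) (hx ⟨c, r, rfl⟩)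

theorem list_prod_mul_mem_commProdSpan {n : ℕ} {l : List A} (hl : ∀ c ∈ l, c ∈ commutators A)
    {x : A} (hx : x ∈ commProdSpan A n) : l.prod * x ∈ commProdSpan A (l.length + n) := by
  induction l with
  | nil => simpa using hx
  | cons c l ih =>
    rw [List.forall_mem_cons] at hl
    simpa [mul_assoc, add_right_comm] using commutator_mul_mem_commProdSpan hl.1 (ih hl.2)

theorem mul_mem_commProdSpan_add {a b : ℕ} {x y : A} (hx : x ∈ commProdSpan A a)
    (hy : y ∈ commProdSpan A b) : x * y ∈ commProdSpan A (a + b) := by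
  induction hx using Submodule.span_induction with
  | mem p hp =>
    obtain ⟨l, rfl, hl, rfl⟩ := hp
    exact list_prod_mul_mem_commProdSpan hl hy
  | zero => simp
  | add x x' _ _ hx hx' => simpa [add_mul] using add_mem hx hx'
  | smul r x _ hx => simpa [mul_assoc] using (commProdSpan A (a + b)).mul_mem_left r hx

instance (n : ℕ) : (commProdSpan A n).IsTwoSided :=
  ⟨fun b hx => by simpa using mul_mem_commProdSpan_add hx (mem_commProdSpan_zero b)⟩

theorem span_commutators_le_commProdSpan_one :
    TwoSidedIdeal.span (commutators A) ≤ (commProdSpan A 1).toTwoSided :=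
  TwoSidedIdeal.span_le.mpr fun c hc => by
    simpa using list_prod_mem_commProdSpan (l := [c]) (by simpa using hc)

theorem list_prod_mem_commProdSpan_of_forall_mem_one {l : List A}
    (hl : ∀ x ∈ l, x ∈ commProdSpan A 1) : l.prod ∈ commProdSpan A l.length := by
  induction l with
  | nil => exact mem_commProdSpan_zero 1
  | cons x l ih =>
    rw [List.forall_mem_cons] at hl
    simpa [add_comm] using mul_mem_commProdSpan_add hl.1 (ih hl.2)

end CommProdSpan

section PolyId

variable {k A : Type*} [CommRing k] [Ring A] [Algebra k A]

theorem lift_commProd (m : ℕ) (f : ℕ → A) :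
    FreeAlgebra.lift k f (commProd k m) =
      ((List.range m).map fun i => f (2 * i) * f (2 * i + 1) - f (2 * i + 1) * f (2 * i)).prod :=
  by simp [commProd, map_list_prod, Function.comp_def]

theorem IsPolyId.list_prod_commutators_eq_zero {m : ℕ} (hid : IsPolyId k A (commProd k m))
    {l : List A} (hlen : l.length = m) (hl : ∀ c ∈ l, c ∈ commutators A) : l.prod = 0 := by
  choose! a b hab using hl
  -- substitute the two entries of the commutator `l[i]` for `x_{2i}` and `x_{2i+1}`
  let f : ℕ → A := fun n => if Even n then a (l.getD (n / 2) 0) else b (l.getD (n / 2) 0)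
  have hf : (List.range m).map (fun i => f (2 * i) * f (2 * i + 1) - f (2 * i + 1) * f (2 * i))
      = l := by
    subst hlen
    refine List.ext_getElem (by simp) fun i _ hi => ?_
    simp [f, show (2 * i + 1) / 2 = i by omega, hi, ← hab _ (List.getElem_mem hi)]
  rw [← hf, ← lift_commProd (k := k), hid f]

theorem IsPolyId.commProdSpan_eq_bot {m : ℕ} (hid : IsPolyId k A (commProd k m)) :
    commProdSpan A m = ⊥ :=
  Submodule.span_eq_bot.mpr fun _ ⟨_, hlen, hl, hp⟩ =>
    hp ▸ hid.list_prod_commutators_eq_zero hlen hl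

end PolyId

theorem commutator_ideal_nilpotent_general
    (k A : Type*) [CommRing k] [Ring A] [Algebra k A]
    (m : ℕ) (hid : IsPolyId k A (commProd k m)) :
    ∃ N : ℕ, ∀ l : List A, l.length = N →
      (∀ x ∈ l, x ∈ TwoSidedIdeal.span {y : A | ∃ a b : A, y = a * b - b * a}) →
      l.prod = 0 := by
  refine ⟨m, fun l hlen hl => ?_⟩
  have hl₁ : ∀ x ∈ l, x ∈ commProdSpan A 1 := fun x hx =>
    Ideal.mem_toTwoSided.mp (span_commutators_le_commProdSpan_one (hl x hx))
  have hlm : l.prod ∈ commProdSpan A m := hlen ▸ list_prod_mem_commProdSpan_of_forall_mem_one hl₁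
  rwa [hid.commProdSpan_eq_bot, Submodule.mem_bot] at hlm

theorem commutator_ideal_nilpotent
    (k A : Type*) [CommRing k] [Ring A] [Algebra k A]
    (m : ℕ) (hm : 1 ≤ m) (hid : IsPolyId k A (commProd k m)) :
    ∃ N : ℕ, ∀ l : List A, l.length = N →
      (∀ x ∈ l, x ∈ TwoSidedIdeal.span {y : A | ∃ a b : A, y = a * b - b * a}) →
      l.prod = 0 :=
  commutator_ideal_nilpotent_general k A m hid
end

section
/- Let F be a field of characteristic zero and let V be an infinite-dimensional F-vector space (for instance V = ℕ →₀ F). Then for every m ≥ 1, the product of m commutators [x₁,x₂][x₃,x₄]⋯[x₂ₘ₋₁,x₂ₘ] is not a polynomial identity of the exterior (Grassmann) algebra Λ(V). -/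
/-! Substitute for the variables `ι w₀, ι w₁, …` with `w` linearly independent in `V`. As
`ι u * ι v = -(ι v * ι u)`, each commutator evaluates to `2 • ι w₂ᵢ * ι w₂ᵢ₊₁`, so the whole
product evaluates to `2 ^ m • ι w₀ ⋯ ι w₂ₘ₋₁`. This is nonzero: `2` is invertible in
characteristic zero, and a wedge of linearly independent vectors does not vanish. -/

namespace ExteriorAlgebra

section CommRing

variable {R M : Type*} [CommRing R] [AddCommGroup M] [Module R M]

theorem ι_mul_ι_sub_ι_mul_ι (x y : M) :
    ι R x * ι R y - ι R y * ι R x = (2 : R) • (ι R x * ι R y) := by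
  rw [← neg_eq_of_add_eq_zero_right (ι_add_mul_swap x y), sub_neg_eq_add, two_smul]

theorem ιMulti_eq_prod_range (n : ℕ) (w : ℕ → M) :
    ιMulti R n (fun i : Fin n => w i) = ((List.range n).map fun k => ι R (w k)).prod := by
  rw [ιMulti_apply, List.ofFn_eq_map, ← List.map_coe_finRange_eq_range, List.map_map]
  rfl

end CommRing

theorem ιMulti_ne_zero_of_linearIndependent {K E : Type*} [Field K] [AddCommGroup E] [Module K E]
    {n : ℕ} {v : Fin n → E} (hv : LinearIndependent K v) : ιMulti K n v ≠ 0 := by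
  have := (exteriorPower.ιMulti_family_linearIndependent_field (n := n) hv).ne_zero
    (Set.powersetCard.ofFinEmbEquiv (OrderIso.refl _).toOrderEmbedding)
  simp only [exteriorPower.ιMulti_family, Equiv.symm_apply_apply] at this
  rwa [ne_eq, ← Submodule.coe_eq_zero, exteriorPower.ιMulti_apply_coe] at this

end ExteriorAlgebra

theorem exists_linearIndependent_nat_of_not_finiteDimensional {K E : Type*} [Field K]
    [AddCommGroup E] [Module K E] (h : ¬ FiniteDimensional K E) :
    ∃ w : ℕ → E, LinearIndependent K w := by
  let b := Module.Basis.ofVectorSpace K E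
  have : Infinite (Module.Basis.ofVectorSpaceIndex K E) := by
    by_contra hfin
    rw [not_infinite_iff_finite] at hfin
    exact h (Module.Finite.of_basis b)
  exact ⟨b ∘ Infinite.natEmbedding _, b.linearIndependent.comp _ (Infinite.natEmbedding _).injective⟩

section commProd

open FreeAlgebra

variable {R : Type*} [CommRing R]

theorem commProd_succ (m : ℕ) :
    commProd R (m + 1) = commProd R m *
      (ι R (2 * m) * ι R (2 * m + 1) - ι R (2 * m + 1) * ι R (2 * m)) :=
  List.prod_range_succ _ m

theorem lift_ι_commProd {M : Type*} [AddCommGroup M] [Module R M] (w : ℕ → M) (m : ℕ) :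
    lift R (fun k => ExteriorAlgebra.ι R (w k)) (commProd R m) =
      (2 : R) ^ m • ExteriorAlgebra.ιMulti R (2 * m) (fun i => w i) := by
  rw [ExteriorAlgebra.ιMulti_eq_prod_range]
  induction m with
  | zero => simp [commProd]
  | succ m ih =>
    rw [commProd_succ, map_mul, ih, map_sub, map_mul, map_mul, lift_ι_apply, lift_ι_apply,
      ExteriorAlgebra.ι_mul_ι_sub_ι_mul_ι, mul_add, mul_one, List.prod_range_succ,
      List.prod_range_succ, smul_mul_smul_comm, pow_succ, mul_assoc]

end commProd

theorem grassmann_not_satisfies_commProd_general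
    (F : Type*) [Field F] [CharZero F] (V : Type*) [AddCommGroup V] [Module F V]
    (hV : ¬ FiniteDimensional F V) (m : ℕ) :
    ¬ IsPolyId F (ExteriorAlgebra F V) (commProd F m) := by
  intro hId
  obtain ⟨w, hw⟩ := exists_linearIndependent_nat_of_not_finiteDimensional hV
  have hzero := hId (fun k => ExteriorAlgebra.ι F (w k))
  rw [lift_ι_commProd] at hzero
  exact smul_ne_zero (pow_ne_zero m two_ne_zero)
    (ExteriorAlgebra.ιMulti_ne_zero_of_linearIndependent (hw.comp _ Fin.val_injective)) hzero

theorem grassmann_not_satisfies_commProd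
    (F : Type*) [Field F] [CharZero F] (V : Type*) [AddCommGroup V] [Module F V]
    (hV : ¬ FiniteDimensional F V) (m : ℕ) (hm : 1 ≤ m) :
    ¬ IsPolyId F (ExteriorAlgebra F V) (commProd F m) :=
  grassmann_not_satisfies_commProd_general F V hV m
end

section
/- Let F be a field and n ≥ 2. In the matrix algebra M_n(F), consider the set S = {e₁₂, e₂₃, …, e_{n−1,n}, e_{n,1}} of matrix units. Then every product of at most n−1 elements of S (repetitions allowed, in any order) is nilpotent, but the non-unital F-subalgebra of M_n(F) generated by S is not nilpotent. -/
open Equiv.Perm in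
theorem finRotate_pow_apply_eq_self_iff {n : ℕ} (hn : 2 ≤ n) (i : Fin n) (k : ℕ) :
    (finRotate n ^ k) i = i ↔ n ∣ k := by
  have hcycle := isCycle_finRotate_of_le hn
  have hi : finRotate n i ≠ i := by
    rw [← mem_support, support_finRotate_of_le hn]; exact Finset.mem_univ i
  rw [← hcycle.pow_eq_one_iff' hi, ← orderOf_dvd_iff_pow_eq_one, hcycle.orderOf,
    support_finRotate_of_le hn, Finset.card_univ, Fintype.card_fin]

theorem finRotate_apply_eq_mk {n : ℕ} (i : Fin n) (h : (i.val + 1) % n < n) :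
    finRotate n i = ⟨(i.val + 1) % n, h⟩ := by
  have := i.neZero
  rw [finRotate_apply]
  ext
  simp [Fin.val_add]

theorem not_exists_forall_list_prod_eq_zero_of_isIdempotentElem {A : Type*} [MonoidWithZero A]
    [Nontrivial A] {s : Set A} {e : A} (he : IsIdempotentElem e) (he0 : e ≠ 0) (hes : e ∈ s) :
    ¬ ∃ N, ∀ l : List A, l.length = N → (∀ x ∈ l, x ∈ s) → l.prod = 0 := by
  rintro ⟨N, hN⟩
  have hpow : e ^ N = 0 := by
    simpa using hN (List.replicate N e) List.length_replicate
      fun x hx => List.eq_of_mem_replicate hx ▸ hes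
  cases N with
  | zero => exact one_ne_zero (pow_zero e ▸ hpow)
  | succ N => exact he0 (he.pow_succ_eq N ▸ hpow)

namespace Matrix

variable {ι R : Type*} [DecidableEq ι] [Semiring R]

theorem single_ne_zero (i j : ι) {c : R} (hc : c ≠ 0) : single i j c ≠ 0 :=
  fun h => hc (by simpa using congr_fun₂ h i j)

variable [Fintype ι]

theorem isNilpotent_single_of_ne {i j : ι} (h : i ≠ j) (c : R) : IsNilpotent (single i j c) :=
  ⟨2, by rw [pow_two, single_mul_single_of_ne _ _ _ _ h.symm]⟩

theorem isIdempotentElem_single_one (i : ι) : IsIdempotentElem (single i i (1 : R)) := by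
  rw [IsIdempotentElem, single_mul_single_same, one_mul]

variable (f : ι → ι)

theorem single_mul_list_prod_eq_zero_or_eq_single_iterate {l : List (Matrix ι ι R)}
    (hl : ∀ x ∈ l, x ∈ Set.range fun i => single i (f i) (1 : R)) (a b : ι) :
    single a b 1 * l.prod = 0 ∨ single a b 1 * l.prod = single a (f^[l.length] b) 1 := by
  induction l generalizing b with
  | nil => simp
  | cons x t ih =>
    obtain ⟨c, rfl⟩ := hl x List.mem_cons_self
    dsimp only
    rw [List.prod_cons, ← mul_assoc]
    by_cases hbc : b = c
    · subst hbc
      rw [single_mul_single_same, one_mul]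
      exact ih (fun y hy => hl y (List.mem_cons_of_mem _ hy)) (f b)
    · left
      rw [single_mul_single_of_ne _ _ _ _ hbc, zero_mul]

theorem list_prod_eq_zero_or_eq_single_iterate {l : List (Matrix ι ι R)}
    (hl : ∀ x ∈ l, x ∈ Set.range fun i => single i (f i) (1 : R)) (hne : l ≠ []) :
    l.prod = 0 ∨ ∃ i, l.prod = single i (f^[l.length] i) 1 := by
  obtain ⟨x, t, rfl⟩ := List.exists_cons_of_ne_nil hne
  obtain ⟨i, rfl⟩ := hl x List.mem_cons_self
  rw [List.prod_cons]
  refine (single_mul_list_prod_eq_zero_or_eq_single_iterate f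
    (fun y hy => hl y (List.mem_cons_of_mem _ hy)) i (f i)).imp_right fun h => ⟨i, ?_⟩
  rw [h, List.length_cons, Function.iterate_succ_apply]

theorem isNilpotent_list_prod_of_iterate_ne {l : List (Matrix ι ι R)}
    (hl : ∀ x ∈ l, x ∈ Set.range fun i => single i (f i) (1 : R)) (hne : l ≠ [])
    (hf : ∀ i, f^[l.length] i ≠ i) : IsNilpotent l.prod := by
  rcases list_prod_eq_zero_or_eq_single_iterate f hl hne with h | ⟨i, h⟩
  · exact h ▸ IsNilpotent.zero
  · exact h ▸ isNilpotent_single_of_ne (hf i).symm 1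

theorem single_iterate_succ_mem {S : Type*} [SetLike S (Matrix ι ι R)]
    [MulMemClass S (Matrix ι ι R)] {s : S} (hs : Set.range (fun i => single i (f i) (1 : R)) ⊆ s)
    (i : ι) (m : ℕ) :
    single i (f^[m + 1] i) (1 : R) ∈ s := by
  induction m with
  | zero => exact hs ⟨i, rfl⟩
  | succ m ih =>
    rw [Function.iterate_succ_apply' f (m + 1), ← one_mul (1 : R),
      ← single_mul_single_same (1 : R) i (f^[m + 1] i)]
    exact mul_mem ih (hs ⟨_, rfl⟩)

end Matrix

theorem matrix_units_short_products_nilpotent_but_not_nilpotent_subalgebra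
    (F : Type*) [Field F] (n : ℕ) (hn : 2 ≤ n) :
    (∀ l : List (Matrix (Fin n) (Fin n) F), 1 ≤ l.length → l.length ≤ n - 1 →
      (∀ x ∈ l, x ∈ Set.range (fun i : Fin n =>
        Matrix.single i (⟨(i.val + 1) % n, Nat.mod_lt _ (by omega)⟩ : Fin n) (1 : F))) →
      IsNilpotent l.prod) ∧
    ¬ (∃ N : ℕ, ∀ l : List (Matrix (Fin n) (Fin n) F), l.length = N →
        (∀ x ∈ l, x ∈ NonUnitalAlgebra.adjoin F (Set.range (fun i : Fin n =>
          Matrix.single i (⟨(i.val + 1) % n, Nat.mod_lt _ (by omega)⟩ : Fin n) (1 : F)))) →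
        l.prod = 0) := by
  simp only [← finRotate_apply_eq_mk]
  have : NeZero n := ⟨by omega⟩
  refine ⟨fun l hpos hlt hl => ?_, ?_⟩
  · refine Matrix.isNilpotent_list_prod_of_iterate_ne _ hl (List.ne_nil_of_length_pos hpos)
      fun i h => ?_
    rw [Equiv.Perm.iterate_eq_pow, finRotate_pow_apply_eq_self_iff hn] at h
    exact absurd (Nat.le_of_dvd hpos h) (by omega)
  · refine not_exists_forall_list_prod_eq_zero_of_isIdempotentElem
      (Matrix.isIdempotentElem_single_one 0) (Matrix.single_ne_zero 0 0 one_ne_zero) ?_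
    have hmem := Matrix.single_iterate_succ_mem (R := F) (finRotate n)
      (NonUnitalAlgebra.subset_adjoin F) 0 (n - 1)
    rwa [Nat.sub_add_cancel (by omega), Equiv.Perm.iterate_eq_pow,
      (finRotate_pow_apply_eq_self_iff hn 0 n).2 dvd_rfl] at hmem
end
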